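/- arXiv:1311.7357 — 2 statements merged into one kernel-verified Lean document; each statement's English description precedes it below -/
import Mathlib

section
/- Let a list of l items be initially ordered [a_1,…,a_l] and let σ_δ consist of m repetitions of the phase: a_1,…,a_l, then a_1,a_1,a_1,a_2,a_2,a_2,…,a_l,a_l,a_l, then a_l,a_{l−1},…,a_1, then a_l,a_l,a_l,a_{l−1},a_{l−1},a_{l−1},…,a_1,a_1,a_1. Under the full cost model, MTFO(σ_δ) = m·(5l² + 3l) and OPT(σ_δ) ≤ m·(2l² + 6l). -/
namespace ListUpdate

variable {α : Type} [DecidableEq α]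

/-- Swap the adjacent items at (0-based) positions `i` and `i+1`. -/
def adjSwap (L : List α) (i : ℕ) : List α :=
  L.take i ++ (match L.drop i with
    | a :: b :: t => b :: a :: t
    | t => t)

/-- An offline action for one request: a sequence of paid exchanges performed
before the access (each given by the position of the swapped pair), and the
target position for the free exchange performed after the access. -/
structure Action (α : Type) where
  paid : List ℕ
  target : ℕ

def doPaid (L : List α) (ps : List ℕ) : List α := ps.foldl adjSwap L

/-- Move item `r` (for free) to position `min j (current position)`,
i.e. to any position not farther from the front. -/
def freeMove (L : List α) (r : α) (j : ℕ) : List α :=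
  (L.erase r).insertIdx (min j (L.idxOf r)) r

/-- Cost of one offline step: one unit per paid exchange plus the access cost;
`c = 1` gives the full cost model, `c = 0` the partial cost model. -/
def stepCost (c : ℕ) (L : List α) (r : α) (a : Action α) : ℕ :=
  a.paid.length + ((doPaid L a.paid).idxOf r + c)

def stepList (L : List α) (r : α) (a : Action α) : List α :=
  freeMove (doPaid L a.paid) r a.target

/-- Total cost of serving the request sequence with the given actions. -/
def serveCost (c : ℕ) : List α → List α → List (Action α) → ℕ
  | _, [], _ => 0
  | _, _ :: _, [] => 0
  | L, r :: σ, a :: as => stepCost c L r a + serveCost c (stepList L r a) σ as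

/-- The list configuration after serving the requests with the given actions. -/
def serveList : List α → List α → List (Action α) → List α
  | L, [], _ => L
  | L, _ :: _, [] => L
  | L, r :: σ, a :: as => serveList (stepList L r a) σ as

/-- `optCost c L σ` : the optimal offline cost of serving `σ` starting from list `L`. -/
noncomputable def optCost (c : ℕ) (L : List α) (σ : List α) : ℕ :=
  sInf { n | ∃ as : List (Action α), as.length = σ.length ∧ serveCost c L σ as = n }

/-- Cost of an MTF2 (move-to-front-every-other-access) algorithm: it keeps one bit
per item; on each request the requested item's bit is flipped and the item is moved
to the front exactly when the bit becomes `false` (i.e. 0). -/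
def mtf2Cost (c : ℕ) : (α → Bool) → List α → List α → ℕ
  | _, _, [] => 0
  | bits, L, r :: σ =>
    (L.idxOf r + c) +
      mtf2Cost c (Function.update bits r (!bits r))
        (if !bits r then L else r :: L.erase r) σ

/-- Final list of an MTF2 algorithm. -/
def mtf2List : (α → Bool) → List α → List α → List α
  | _, L, [] => L
  | bits, L, r :: σ =>
      mtf2List (Function.update bits r (!bits r))
        (if !bits r then L else r :: L.erase r) σ

/-- MTFO moves the requested item to the front on every odd request to it:
this is MTF2 with all bits initially 1. -/
def mtfoCost (c : ℕ) (L σ : List α) : ℕ := mtf2Cost c (fun _ => true) L σ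

/-- MTFE moves the requested item to the front on every even request to it:
this is MTF2 with all bits initially 0. -/
def mtfeCost (c : ℕ) (L σ : List α) : ℕ := mtf2Cost c (fun _ => false) L σ

/-- One step of TS (Timestamp). `h` is the list of previous requests, most recent
first. The requested item `x` is inserted in front of the first item of the list
that precedes `x` and was requested at most once since the last request to `x`;
if there is no such item, or this is the first request to `x`, nothing moves. -/
def tsStep (h : List α) (L : List α) (x : α) : List α :=
  if x ∈ h then
    let cnt : α → ℕ := fun z => (h.takeWhile (fun w => decide (w ≠ x))).count z
    let pre := L.takeWhile (fun w => decide (w ≠ x))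
    let keep := pre.takeWhile (fun z => decide (2 ≤ cnt z))
    keep ++ x :: (pre.drop keep.length ++ (L.dropWhile (fun w => decide (w ≠ x))).tail)
  else L

/-- Cost of TS; `h` is the history of previous requests, most recent first
(initially `[]`). -/
def tsCost (c : ℕ) : List α → List α → List α → ℕ
  | _, _, [] => 0
  | h, L, r :: σ => (L.idxOf r + c) + tsCost c (r :: h) (tsStep h L r) σ

/-- An online algorithm with advice: its action may depend on the advice tape and
on the sequence of requests seen so far (ending with the current request). -/
def OnlineAdviceAlg (α : Type) := (ℕ → Bool) → List α → Action α

/-- Total cost of running the online algorithm `A` with advice tape `φ`: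
`past` is the reversed-free list of requests served so far (oldest first). -/
def runAdvCost (c : ℕ) (A : OnlineAdviceAlg α) (φ : ℕ → Bool) :
    List α → List α → List α → ℕ
  | _, _, [] => 0
  | past, L, r :: σ =>
      stepCost c L r (A φ (past ++ [r])) +
        runAdvCost c A φ (past ++ [r]) (stepList L r (A φ (past ++ [r]))) σ

/-- `A`, run on `σ` with tape `φ`, reads at most the first `k` bits of advice:
its behaviour on every step of `σ` is unchanged if the tape is modified
beyond position `k`. -/
def UsesAdvice (A : OnlineAdviceAlg α) (φ : ℕ → Bool) (σ : List α) (k : ℕ) : Prop :=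
  ∀ ψ : ℕ → Bool, (∀ i < k, ψ i = φ i) →
    ∀ t, 0 < t → t ≤ σ.length → A ψ (σ.take t) = A φ (σ.take t)

end ListUpdate

open ListUpdate

/-- Each item of `l` repeated `k` times, in order. -/
def dupEach (k : ℕ) (l : List ℕ) : List ℕ :=
  (l.map (fun i => List.replicate k i)).flatten

/-- One phase of `σ_δ`: `a_1,…,a_l`, then `a_1,a_1,a_1,…,a_l,a_l,a_l`, then
`a_l,…,a_1`, then `a_l,a_l,a_l,…,a_1,a_1,a_1` (items are `0,…,l-1`). -/
def phaseDelta (l : ℕ) : List ℕ :=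
  List.range l ++ dupEach 3 (List.range l) ++
    (List.range l).reverse ++ dupEach 3 ((List.range l).reverse)

/-- `σ_δ`: `m` repetitions of the phase. -/
def sigmaDelta (l m : ℕ) : List ℕ := (List.replicate m (phaseDelta l)).flatten

/-!
A phase of `σ_δ` is a *sweep* over `a = [a₁, …, a_l]` (the requests `a`, then every item of `a`
three times in a row) followed by a sweep over `a.reverse`, and both algorithms turn the list `a`
into `a.reverse` during a sweep.

MTFO: in the first pass every item is at the position it had in `a` and moves to the front, which
reverses the list at cost `l(l+1)/2`. In the triple pass the requested item is always last; its
first request leaves it there, the second moves it to the front and the third finds it there, at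
cost `2l+1` per item. Every item is requested four times per sweep, so its bit is restored and the
next sweep starts from the same kind of configuration: `(5l² + 3l)/2` per sweep.

Offline: leave the list alone during the first pass (cost `l(l+1)/2`) and move every request of the
triple pass to the front (cost `i + 3` for the item at position `i`): `l² + 3l` per sweep.
After two sweeps both are back at the initial configuration, so the costs of the phases add up.
-/

namespace ListUpdate

variable {α : Type}

theorem nodup_append_cons {x : α} {r s : List α} (h : (r ++ x :: s).Nodup) :
    x ∉ r ∧ x ∉ s ∧ ((x :: r) ++ s).Nodup := by
  have h' := List.nodup_middle.1 h
  have hx := (List.nodup_cons.1 h').1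
  exact ⟨fun hr => hx (List.mem_append_left _ hr), fun hs => hx (List.mem_append_right _ hs), h'⟩

theorem flatMap_replicate_three_cons (x : α) (s : List α) :
    (x :: s).flatMap (List.replicate 3) = x :: x :: x :: s.flatMap (List.replicate 3) := rfl

theorem replicate_three_mul_succ (n : ℕ) (a : α) :
    List.replicate (3 * (n + 1)) a = a :: a :: a :: List.replicate (3 * n) a := by
  rw [Nat.mul_succ, add_comm, List.replicate_add]
  rfl

theorem insertIdx_length_append (r s : List α) (x : α) :
    (r ++ s).insertIdx r.length x = r ++ x :: s := by
  induction r with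
  | nil => simp
  | cons y r ih => simp [List.insertIdx_succ_cons, ih]

variable [DecidableEq α]

theorem idxOf_append_cons_of_notMem {x : α} {r s : List α} (h : x ∉ r) :
    (r ++ x :: s).idxOf x = r.length := by
  simp [List.idxOf_append_of_notMem h]

theorem erase_append_cons_of_notMem {x : α} {r s : List α} (h : x ∉ r) :
    (r ++ x :: s).erase x = r ++ s := by
  simp [List.erase_append_right _ h]

theorem update_eq_on_of_notMem {β : Type} {f : α → β} {x : α} {s : List α} {b v : β}
    (hx : x ∉ s) (hf : ∀ y ∈ s, f y = v) : ∀ y ∈ s, Function.update f x b y = v := fun y hy => by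
  rw [Function.update_of_ne (ne_of_mem_of_not_mem hy hx)]
  exact hf y hy

theorem freeMove_zero (L : List α) (r : α) : freeMove L r 0 = r :: L.erase r := by
  simp [freeMove]

theorem freeMove_append_cons_of_le {x : α} {r s : List α} {j : ℕ} (hx : x ∉ r)
    (hj : r.length ≤ j) : freeMove (r ++ x :: s) x j = r ++ x :: s := by
  rw [freeMove, erase_append_cons_of_notMem hx, idxOf_append_cons_of_notMem hx, min_eq_right hj,
    insertIdx_length_append]

section MTF2

variable {c : ℕ} {bits : α → Bool} {L : List α} {r : α} {σ : List α}

/-- The bits of MTF2 after serving `σ`: each request flips the bit of the requested item. -/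
def mtf2Bits (bits : α → Bool) (σ : List α) : α → Bool :=
  fun x => bits x ^^ decide (Odd (σ.count x))

theorem mtf2Bits_nil : mtf2Bits bits [] = bits := by
  funext x; simp [mtf2Bits]

theorem mtf2Bits_cons :
    mtf2Bits (Function.update bits r (!bits r)) σ = mtf2Bits bits (r :: σ) := by
  funext x
  rcases eq_or_ne x r with rfl | hx
  · simp only [mtf2Bits, Function.update_self, List.count_cons_self, Nat.odd_add_one,
      decide_not, Bool.not_xor, Bool.xor_not]
  · simp [mtf2Bits, hx, Ne.symm hx]

theorem mtf2Bits_of_even (h : ∀ x, Even (σ.count x)) : mtf2Bits bits σ = bits := by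
  funext x; simp [mtf2Bits, Nat.not_odd_iff_even.2 (h x)]

theorem mtf2Bits_of_nodup_of_mem (hσ : σ.Nodup) {x : α} (hx : x ∈ σ) :
    mtf2Bits bits σ x = !bits x := by
  simp [mtf2Bits, List.count_eq_one_of_mem hσ hx]

theorem mtf2Cost_cons_of_true (h : bits r = true) :
    mtf2Cost c bits L (r :: σ) =
      L.idxOf r + c + mtf2Cost c (Function.update bits r false) (r :: L.erase r) σ := by
  simp [mtf2Cost, h]

theorem mtf2Cost_cons_of_false (h : bits r = false) :
    mtf2Cost c bits L (r :: σ) = L.idxOf r + c + mtf2Cost c (Function.update bits r true) L σ := by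
  simp [mtf2Cost, h]

theorem mtf2List_cons_of_true (h : bits r = true) :
    mtf2List bits L (r :: σ) = mtf2List (Function.update bits r false) (r :: L.erase r) σ := by
  simp [mtf2List, h]

theorem mtf2List_cons_of_false (h : bits r = false) :
    mtf2List bits L (r :: σ) = mtf2List (Function.update bits r true) L σ := by
  simp [mtf2List, h]

theorem mtf2Cost_append (σ₁ σ₂ : List α) :
    mtf2Cost c bits L (σ₁ ++ σ₂) =
      mtf2Cost c bits L σ₁ + mtf2Cost c (mtf2Bits bits σ₁) (mtf2List bits L σ₁) σ₂ := by
  induction σ₁ generalizing bits L with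
  | nil => simp [mtf2Cost, mtf2List, mtf2Bits_nil]
  | cons r σ₁ ih => simp [mtf2Cost, mtf2List, ih, mtf2Bits_cons, Nat.add_assoc]

theorem mtf2List_append (σ₁ σ₂ : List α) :
    mtf2List bits L (σ₁ ++ σ₂) = mtf2List (mtf2Bits bits σ₁) (mtf2List bits L σ₁) σ₂ := by
  induction σ₁ generalizing bits L with
  | nil => simp [mtf2List, mtf2Bits_nil]
  | cons r σ₁ ih => simp [mtf2List, ih, mtf2Bits_cons]

theorem mtf2Cost_flatten_replicate (hL : mtf2List bits L σ = L) (hb : mtf2Bits bits σ = bits)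
    (m : ℕ) :
    mtf2Cost c bits L (List.replicate m σ).flatten = m * mtf2Cost c bits L σ := by
  induction m with
  | zero => simp [mtf2Cost]
  | succ m ih =>
    rw [List.replicate_succ, List.flatten_cons, mtf2Cost_append, hb, hL, ih]
    ring

end MTF2

section MTF2Runs

variable {bits : α → Bool} {r s : List α}

theorem mtf2Cost_of_true (h : (r ++ s).Nodup) (hb : ∀ x ∈ s, bits x = true) :
    2 * mtf2Cost 1 bits (r ++ s) s = s.length * (2 * r.length + s.length + 1) := by
  induction s generalizing r bits with
  | nil => simp [mtf2Cost]
  | cons x s ih =>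
    obtain ⟨hxr, hxs, h'⟩ := nodup_append_cons h
    rw [mtf2Cost_cons_of_true (hb x List.mem_cons_self), idxOf_append_cons_of_notMem hxr,
      erase_append_cons_of_notMem hxr, mul_add, ← List.cons_append,
      ih h' (update_eq_on_of_notMem hxs fun y hy => hb y (List.mem_cons_of_mem _ hy))]
    simp only [List.length_cons]
    ring

theorem mtf2List_of_true (h : (r ++ s).Nodup) (hb : ∀ x ∈ s, bits x = true) :
    mtf2List bits (r ++ s) s = s.reverse ++ r := by
  induction s generalizing r bits with
  | nil => simp [mtf2List]
  | cons x s ih =>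
    obtain ⟨hxr, hxs, h'⟩ := nodup_append_cons h
    rw [mtf2List_cons_of_true (hb x List.mem_cons_self), erase_append_cons_of_notMem hxr,
      ← List.cons_append,
      ih h' (update_eq_on_of_notMem hxs fun y hy => hb y (List.mem_cons_of_mem _ hy))]
    simp

theorem mtf2Cost_triple_of_false (h : (r ++ s).Nodup) (hb : ∀ x ∈ s, bits x = false) :
    mtf2Cost 1 bits (r ++ s.reverse) (s.flatMap (List.replicate 3)) =
      s.length * (2 * (r.length + s.length) + 1) := by
  induction s generalizing r bits with
  | nil => simp [mtf2Cost]
  | cons x s ih =>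
    obtain ⟨hxr, hxs, h'⟩ := nodup_append_cons h
    have hx : x ∉ r ++ s.reverse := by simp [hxr, hxs]
    rw [flatMap_replicate_three_cons, List.reverse_cons, ← List.append_assoc,
      mtf2Cost_cons_of_false (hb x List.mem_cons_self),
      mtf2Cost_cons_of_true (by simp), erase_append_cons_of_notMem hx,
      mtf2Cost_cons_of_false (by simp), List.idxOf_cons_self, idxOf_append_cons_of_notMem hx,
      Function.update_idem, Function.update_idem, List.append_nil, ← List.cons_append,
      ih h' (update_eq_on_of_notMem hxs fun y hy => hb y (List.mem_cons_of_mem _ hy))]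
    simp only [List.length_cons, List.length_append, List.length_reverse]
    ring

theorem mtf2List_triple_of_false (h : (r ++ s).Nodup) (hb : ∀ x ∈ s, bits x = false) :
    mtf2List bits (r ++ s.reverse) (s.flatMap (List.replicate 3)) = s.reverse ++ r := by
  induction s generalizing r bits with
  | nil => simp [mtf2List]
  | cons x s ih =>
    obtain ⟨hxr, hxs, h'⟩ := nodup_append_cons h
    have hx : x ∉ r ++ s.reverse := by simp [hxr, hxs]
    rw [flatMap_replicate_three_cons, List.reverse_cons, ← List.append_assoc,
      mtf2List_cons_of_false (hb x List.mem_cons_self),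
      mtf2List_cons_of_true (by simp), erase_append_cons_of_notMem hx,
      mtf2List_cons_of_false (by simp), Function.update_idem, Function.update_idem,
      List.append_nil, ← List.cons_append,
      ih h' (update_eq_on_of_notMem hxs fun y hy => hb y (List.mem_cons_of_mem _ hy))]
    simp

end MTF2Runs

section Serve

variable {c : ℕ} {L : List α} {r : α} {σ : List α} {as : List (Action α)}

theorem serveCost_cons_free (j : ℕ) :
    serveCost c L (r :: σ) (⟨[], j⟩ :: as) = L.idxOf r + c + serveCost c (freeMove L r j) σ as := by
  simp [serveCost, stepCost, stepList, doPaid]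

theorem serveList_cons_free (j : ℕ) :
    serveList L (r :: σ) (⟨[], j⟩ :: as) = serveList (freeMove L r j) σ as := by
  simp [serveList, stepList, doPaid]

theorem serveCost_append {σ₁ σ₂ : List α} {as₁ as₂ : List (Action α)} (h : as₁.length = σ₁.length) :
    serveCost c L (σ₁ ++ σ₂) (as₁ ++ as₂) =
      serveCost c L σ₁ as₁ + serveCost c (serveList L σ₁ as₁) σ₂ as₂ := by
  induction σ₁ generalizing as₁ L with
  | nil => simp_all [serveCost, serveList]
  | cons r σ ih =>
    obtain _ | ⟨a, as⟩ := as₁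
    · simp at h
    · simp [serveCost, serveList, ih (Nat.succ.inj h), Nat.add_assoc]

theorem serveList_append {σ₁ σ₂ : List α} {as₁ as₂ : List (Action α)} (h : as₁.length = σ₁.length) :
    serveList L (σ₁ ++ σ₂) (as₁ ++ as₂) = serveList (serveList L σ₁ as₁) σ₂ as₂ := by
  induction σ₁ generalizing as₁ L with
  | nil => simp_all [serveList]
  | cons r σ ih =>
    obtain _ | ⟨a, as⟩ := as₁
    · simp at h
    · simp [serveList, ih (Nat.succ.inj h)]

theorem serveCost_flatten_replicate (hlen : as.length = σ.length) (hL : serveList L σ as = L)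
    (m : ℕ) :
    serveCost c L (List.replicate m σ).flatten (List.replicate m as).flatten =
      m * serveCost c L σ as := by
  induction m with
  | zero => simp [serveCost]
  | succ m ih =>
    rw [List.replicate_succ, List.replicate_succ, List.flatten_cons, List.flatten_cons,
      serveCost_append hlen, hL, ih]
    ring

end Serve

section ServeRuns

variable {r s : List α}

theorem serveCost_stay (h : (r ++ s).Nodup) {j : ℕ} (hj : (r ++ s).length ≤ j) :
    2 * serveCost 1 (r ++ s) s (List.replicate s.length ⟨[], j⟩) =
      s.length * (2 * r.length + s.length + 1) := by
  induction s generalizing r with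
  | nil => simp [serveCost]
  | cons x s ih =>
    obtain ⟨hxr, -, -⟩ := nodup_append_cons h
    rw [List.length_cons, List.replicate_succ, serveCost_cons_free,
      freeMove_append_cons_of_le hxr (le_trans (by simp) hj), idxOf_append_cons_of_notMem hxr,
      List.append_cons, mul_add, ih (by simpa using h) (by simpa using hj)]
    simp only [List.length_append, List.length_singleton]
    ring

theorem serveList_stay (h : (r ++ s).Nodup) {j : ℕ} (hj : (r ++ s).length ≤ j) :
    serveList (r ++ s) s (List.replicate s.length ⟨[], j⟩) = r ++ s := by
  induction s generalizing r with
  | nil => simp [serveList]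
  | cons x s ih =>
    obtain ⟨hxr, -, -⟩ := nodup_append_cons h
    rw [List.length_cons, List.replicate_succ, serveList_cons_free,
      freeMove_append_cons_of_le hxr (le_trans (by simp) hj), List.append_cons,
      ih (by simpa using h) (by simpa using hj)]

theorem serveCost_triple_front (h : (r ++ s).Nodup) :
    2 * serveCost 1 (r ++ s) (s.flatMap (List.replicate 3))
        (List.replicate (3 * s.length) ⟨[], 0⟩) =
      s.length * (2 * r.length + s.length + 5) := by
  induction s generalizing r with
  | nil => simp [serveCost]
  | cons x s ih =>
    obtain ⟨hxr, -, h'⟩ := nodup_append_cons h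
    rw [flatMap_replicate_three_cons, List.length_cons, replicate_three_mul_succ,
      serveCost_cons_free, serveCost_cons_free, serveCost_cons_free, freeMove_zero,
      freeMove_zero, freeMove_zero, idxOf_append_cons_of_notMem hxr,
      erase_append_cons_of_notMem hxr, List.idxOf_cons_self, List.erase_cons_head,
      List.idxOf_cons_self, List.erase_cons_head, ← List.cons_append]
    have := ih h'
    simp only [List.length_cons] at this ⊢
    linarith

theorem serveList_triple_front (h : (r ++ s).Nodup) :
    serveList (r ++ s) (s.flatMap (List.replicate 3)) (List.replicate (3 * s.length) ⟨[], 0⟩) =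
      s.reverse ++ r := by
  induction s generalizing r with
  | nil => simp [serveList]
  | cons x s ih =>
    obtain ⟨hxr, -, h'⟩ := nodup_append_cons h
    rw [flatMap_replicate_three_cons, List.length_cons, replicate_three_mul_succ,
      serveList_cons_free, serveList_cons_free, serveList_cons_free, freeMove_zero,
      freeMove_zero, freeMove_zero, erase_append_cons_of_notMem hxr, List.erase_cons_head,
      List.erase_cons_head, ← List.cons_append, ih h']
    simp

end ServeRuns

end ListUpdate

namespace ListUpdate

variable {α : Type}

def sweep (a : List α) : List α := a ++ a.flatMap (List.replicate 3)

/-- Offline actions for `sweep a` with `a.length = n`: the first pass leaves every item in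
place (the target `n` lies behind every position), the second moves every request to the front. -/
def sweepActs (n : ℕ) : List (Action α) :=
  List.replicate n ⟨[], n⟩ ++ List.replicate (3 * n) ⟨[], 0⟩

@[simp] theorem length_sweep (a : List α) : (sweep a).length = 4 * a.length := by
  simp [sweep]; ring

@[simp] theorem length_sweepActs (n : ℕ) : (sweepActs n : List (Action α)).length = 4 * n := by
  simp [sweepActs]; ring

def phase (a : List α) : List α := sweep a ++ sweep a.reverse

def phaseActs (n : ℕ) : List (Action α) := sweepActs n ++ sweepActs n

@[simp] theorem length_phaseActs (n : ℕ) : (phaseActs n : List (Action α)).length = 8 * n := by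
  simp [phaseActs]; ring

@[simp] theorem length_phase (a : List α) : (phase a).length = 8 * a.length := by
  simp [phase]; ring

variable [DecidableEq α] {a : List α}

theorem count_sweep (x : α) (a : List α) : (sweep a).count x = 4 * a.count x := by
  induction a with
  | nil => simp [sweep]
  | cons y a ih =>
    simp only [sweep, flatMap_replicate_three_cons, List.count_append, List.count_cons] at ih ⊢
    omega

section MTF2

variable {bits : α → Bool}

theorem mtf2Bits_sweep : mtf2Bits bits (sweep a) = bits :=
  mtf2Bits_of_even fun x => by rw [count_sweep]; exact ⟨2 * a.count x, by ring⟩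

theorem mtf2Cost_sweep (ha : a.Nodup) (hb : ∀ x ∈ a, bits x = true) :
    2 * mtf2Cost 1 bits a (sweep a) = 5 * a.length ^ 2 + 3 * a.length := by
  have hb' : ∀ x ∈ a, mtf2Bits bits a x = false := fun x hx => by
    simp [mtf2Bits_of_nodup_of_mem ha hx, hb x hx]
  have h₁ := mtf2Cost_of_true (r := []) (by simpa using ha) hb
  have h₂ := mtf2Cost_triple_of_false (r := []) (by simpa using ha) hb'
  have hL := mtf2List_of_true (r := []) (by simpa using ha) hb
  simp only [List.nil_append, List.append_nil, List.length_nil] at h₁ h₂ hL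
  rw [sweep, mtf2Cost_append, hL, mul_add, h₁, h₂]
  ring

theorem mtf2List_sweep (ha : a.Nodup) (hb : ∀ x ∈ a, bits x = true) :
    mtf2List bits a (sweep a) = a.reverse := by
  have hb' : ∀ x ∈ a, mtf2Bits bits a x = false := fun x hx => by
    simp [mtf2Bits_of_nodup_of_mem ha hx, hb x hx]
  have hL := mtf2List_of_true (r := []) (by simpa using ha) hb
  have hL' := mtf2List_triple_of_false (r := []) (by simpa using ha) hb'
  simp only [List.nil_append, List.append_nil] at hL hL'
  rw [sweep, mtf2List_append, hL, hL']

end MTF2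

theorem serveCost_sweep (ha : a.Nodup) :
    serveCost 1 a (sweep a) (sweepActs a.length) = a.length ^ 2 + 3 * a.length := by
  have h₁ := serveCost_stay (r := []) (by simpa using ha) (le_refl _)
  have h₂ := serveCost_triple_front (r := []) (by simpa using ha)
  have hL := serveList_stay (r := []) (by simpa using ha) (le_refl _)
  simp only [List.nil_append, List.length_nil] at h₁ h₂ hL
  rw [sweep, sweepActs, serveCost_append (by simp), hL]
  linarith

theorem serveList_sweep (ha : a.Nodup) :
    serveList a (sweep a) (sweepActs a.length) = a.reverse := by
  have hL := serveList_stay (r := []) (by simpa using ha) (le_refl _)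
  have hL' := serveList_triple_front (r := []) (by simpa using ha)
  simp only [List.nil_append, List.append_nil] at hL hL'
  rw [sweep, sweepActs, serveList_append (by simp), hL, hL']

section MTF2

variable {bits : α → Bool}

theorem mtf2Bits_phase : mtf2Bits bits (phase a) = bits :=
  mtf2Bits_of_even fun x => by
    rw [phase, List.count_append, count_sweep, count_sweep]
    exact ⟨2 * a.count x + 2 * a.reverse.count x, by ring⟩

theorem mtf2Cost_phase (ha : a.Nodup) (hb : ∀ x ∈ a, bits x = true) :
    mtf2Cost 1 bits a (phase a) = 5 * a.length ^ 2 + 3 * a.length := by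
  have h₁ := mtf2Cost_sweep ha hb
  have h₂ := mtf2Cost_sweep (List.nodup_reverse.2 ha) (by simpa using hb)
  rw [List.length_reverse] at h₂
  rw [phase, mtf2Cost_append, mtf2Bits_sweep, mtf2List_sweep ha hb]
  omega

theorem mtf2List_phase (ha : a.Nodup) (hb : ∀ x ∈ a, bits x = true) :
    mtf2List bits a (phase a) = a := by
  rw [phase, mtf2List_append, mtf2Bits_sweep, mtf2List_sweep ha hb,
    mtf2List_sweep (List.nodup_reverse.2 ha) (by simpa using hb), List.reverse_reverse]

end MTF2

theorem serveCost_phase (ha : a.Nodup) :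
    serveCost 1 a (phase a) (phaseActs a.length) = 2 * a.length ^ 2 + 6 * a.length := by
  have h₂ := serveCost_sweep (List.nodup_reverse.2 ha)
  rw [List.length_reverse] at h₂
  rw [phase, phaseActs, serveCost_append (by simp), serveCost_sweep ha, serveList_sweep ha, h₂]
  ring

theorem serveList_phase (ha : a.Nodup) : serveList a (phase a) (phaseActs a.length) = a := by
  have h₂ := serveList_sweep (List.nodup_reverse.2 ha)
  rw [List.length_reverse, List.reverse_reverse] at h₂
  rw [phase, phaseActs, serveList_append (by simp), serveList_sweep ha, h₂]

end ListUpdate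

theorem phaseDelta_eq_phase (l : ℕ) : phaseDelta l = phase (List.range l) := by
  simp only [phaseDelta, phase, sweep, List.append_assoc]
  rfl

/-- Under the full cost model, `MTFO(σ_δ) = m·(5l² + 3l)` and
`OPT(σ_δ) ≤ m·(2l² + 6l)`. -/
theorem costs_on_sigma_delta (l m : ℕ) :
    mtfoCost 1 (List.range l) (sigmaDelta l m) = m * (5 * l ^ 2 + 3 * l) ∧
    optCost 1 (List.range l) (sigmaDelta l m) ≤ m * (2 * l ^ 2 + 6 * l) := by
  have ha := List.nodup_range (n := l)
  have hb : ∀ x ∈ List.range l, (fun _ => true : ℕ → Bool) x = true := fun _ _ => rfl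
  rw [sigmaDelta, phaseDelta_eq_phase]
  refine ⟨?_, Nat.sInf_le ⟨(List.replicate m (phaseActs l)).flatten, by simp, ?_⟩⟩
  · rw [mtfoCost, mtf2Cost_flatten_replicate (mtf2List_phase ha hb) mtf2Bits_phase,
      mtf2Cost_phase ha hb, List.length_range]
  · have hcost := serveCost_phase ha
    have hL := serveList_phase ha
    rw [List.length_range] at hcost hL
    rw [serveCost_flatten_replicate (by simp) hL, hcost]
end

section
/- For every list of l items with any initial order and any initial bit assignment, the MTF2 algorithm A is 2.5-competitive under the full cost model: there exists a constant b (depending only on l) such that A(σ) ≤ 2.5·OPT(σ) + b for every request sequence σ. -/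
/-!
Amortized analysis with a potential `Φ` that sums, over the ordered pairs `(x, y)` of distinct
items, a weight in `[0, 5]` depending only on the relative order of `x` and `y` in MTF2's list
and in the offline list and on their two bits. The position of an item is the number of items in
front of it, so access costs split over pairs, and the weights make every access satisfy
`4 · ΔMTF2 + ΔΦ ≤ 10 · ΔOPT` pair by pair (the offline free exchange only moves the accessed item
forward), while a paid exchange reverses one pair and so raises `Φ` by at most `10`. Summing over
the requests gives `4 · MTF2(σ) ≤ 10 · OPT(σ) + Φ₀ ≤ 10 · OPT(σ) + 5 l²`.
-/

namespace ListUpdate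

open List

section

variable {α : Type}

theorem insertIdx_eq_take_append_cons_drop (a : α) :
    ∀ (n : ℕ) (l : List α), n ≤ l.length → l.insertIdx n a = l.take n ++ a :: l.drop n
  | 0, l, _ => by simp
  | n + 1, [], h => by simp at h
  | n + 1, b :: l, h => by
    rw [insertIdx_succ_cons, insertIdx_eq_take_append_cons_drop a n l (by simpa using h)]
    simp

theorem adjSwap_eq_self_or (M : List α) (i : ℕ) :
    adjSwap M i = M ∨ ∃ u a b t, M = u ++ a :: b :: t ∧ adjSwap M i = u ++ b :: a :: t := by
  unfold adjSwap
  rcases hd : M.drop i with _ | ⟨a, _ | ⟨b, t⟩⟩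
  · exact .inl (by simpa [hd] using take_append_drop i M)
  · exact .inl (by simpa [hd] using take_append_drop i M)
  · exact .inr ⟨M.take i, a, b, t, by rw [← hd, take_append_drop], rfl⟩

theorem adjSwap_perm (M : List α) (i : ℕ) : adjSwap M i ~ M := by
  rcases adjSwap_eq_self_or M i with h | ⟨u, a, b, t, rfl, h⟩
  · rw [h]
  · rw [h]
    exact (Perm.swap a b t).append_left u

theorem doPaid_perm (M : List α) (ps : List ℕ) : doPaid M ps ~ M := by
  induction ps generalizing M with
  | nil => rfl
  | cons p ps ih => exact (ih (adjSwap M p)).trans (adjSwap_perm M p)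

end

variable {α : Type} [DecidableEq α]

def before (M : List α) (x y : α) : Bool := decide (M.idxOf x < M.idxOf y)

theorem before_cons_of_ne {M : List α} {r x y : α} (hx : x ≠ r) (hy : y ≠ r) :
    before (r :: M) x y = before M x y := by
  simp [before, idxOf_cons_ne _ (Ne.symm hx), idxOf_cons_ne _ (Ne.symm hy)]

theorem before_cons_self {M : List α} {r y : α} (hy : y ≠ r) : before (r :: M) r y = true := by
  simp [before, idxOf_cons_ne _ (Ne.symm hy)]

theorem before_append_cons (u v : List α) {a x y : α} (hx : x ≠ a) (hy : y ≠ a) :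
    before (u ++ a :: v) x y = before (u ++ v) x y := by
  simp only [before, idxOf_append, idxOf_cons_ne _ (Ne.symm hx), idxOf_cons_ne _ (Ne.symm hy)]
  grind [idxOf_lt_length_of_mem]

theorem before_erase {M : List α} {r x y : α} (hr : r ∈ M) (hx : x ≠ r) (hy : y ≠ r) :
    before (M.erase r) x y = before M x y := by
  obtain ⟨u, v, -, rfl, hE⟩ := exists_erase_eq hr
  rw [hE, before_append_cons u v hx hy]

theorem before_append_cons_self_iff {u v : List α} {r y : α} (hr : r ∉ u) :
    before (u ++ r :: v) r y = true ↔ y ∉ u ∧ y ≠ r := by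
  simp only [before, idxOf_append, hr, if_false, idxOf_cons_self, decide_eq_true_eq]
  grind [idxOf_lt_length_of_mem]

theorem before_swap {M : List α} {x y : α} (hx : x ∈ M) (hxy : x ≠ y) :
    before M y x = !before M x y := by
  have hne : M.idxOf x ≠ M.idxOf y := fun h => hxy ((idxOf_inj hx).1 h)
  simp only [before, ← decide_not]
  grind

theorem before_append_swap (u t : List α) {a b x y : α} (hab : ¬(x = a ∧ y = b))
    (hba : ¬(x = b ∧ y = a)) : before (u ++ b :: a :: t) x y = before (u ++ a :: b :: t) x y := by
  rcases eq_or_ne a b with rfl | hne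
  · rfl
  by_cases hb : x ≠ b ∧ y ≠ b
  · rw [before_append_cons u _ hb.1 hb.2, show u ++ a :: b :: t = (u ++ [a]) ++ b :: t by simp,
      before_append_cons _ _ hb.1 hb.2]
    simp
  · have ha : x ≠ a ∧ y ≠ a := by grind
    rw [before_append_cons u _ ha.1 ha.2, show u ++ b :: a :: t = (u ++ [b]) ++ a :: t by simp,
      before_append_cons _ _ ha.1 ha.2]
    simp

theorem freeMove_append_cons {u v : List α} {r : α} (hr : r ∉ u) (j : ℕ) :
    freeMove (u ++ r :: v) r j
      = u.take (min j u.length) ++ r :: (u.drop (min j u.length) ++ v) := by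
  have hidx : (u ++ r :: v).idxOf r = u.length := by simp [idxOf_append, hr]
  rw [freeMove, hidx, erase_append_right _ hr, erase_cons_head,
    insertIdx_eq_take_append_cons_drop _ _ _ (by simp),
    take_append_of_le_length (by omega), drop_append_of_le_length (by omega)]

theorem freeMove_perm {M : List α} {r : α} (hr : r ∈ M) (j : ℕ) : freeMove M r j ~ M := by
  obtain ⟨u, v, hru, rfl, -⟩ := exists_erase_eq hr
  rw [freeMove_append_cons hru]
  calc u.take _ ++ r :: (u.drop _ ++ v) ~ r :: (u.take _ ++ (u.drop _ ++ v)) := perm_middle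
    _ = r :: (u ++ v) := by rw [← append_assoc, take_append_drop]
    _ ~ u ++ r :: v := perm_middle.symm

theorem before_freeMove_of_ne {M : List α} {r x y : α} (hr : r ∈ M) (j : ℕ) (hx : x ≠ r)
    (hy : y ≠ r) : before (freeMove M r j) x y = before M x y := by
  obtain ⟨u, v, hru, rfl, -⟩ := exists_erase_eq hr
  rw [freeMove_append_cons hru, before_append_cons _ _ hx hy, before_append_cons _ _ hx hy,
    ← append_assoc, take_append_drop]

theorem before_freeMove_self {M : List α} {r y : α} (hM : M.Nodup) (j : ℕ)
    (h : before M r y = true) : before (freeMove M r j) r y = true := by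
  have hr : r ∈ M := by
    by_contra hr
    simp only [before, idxOf_eq_length hr, decide_eq_true_eq] at h
    exact absurd h (not_lt.2 idxOf_le_length)
  obtain ⟨u, v, -, rfl, -⟩ := exists_erase_eq hr
  have hru : r ∉ u := ((nodup_append.1 hM).2.2 r · r mem_cons_self rfl)
  rw [freeMove_append_cons hru, before_append_cons_self_iff (fun h => hru (mem_of_mem_take h))]
  obtain ⟨hyu, hyr⟩ := (before_append_cons_self_iff hru).1 h
  exact ⟨fun h => hyu (mem_of_mem_take h), hyr⟩

theorem sum_ite_before_eq_idxOf {M : List α} (hM : M.Nodup) {r : α} (hr : r ∈ M) :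
    ∑ y ∈ M.toFinset.erase r, (if before M y r then (1 : ℤ) else 0) = M.idxOf r := by
  have hset : (M.toFinset.erase r).filter (fun y => before M y r)
      = (M.take (M.idxOf r)).toFinset := by
    ext z
    simp only [Finset.mem_filter, Finset.mem_erase, mem_toFinset, before, decide_eq_true_eq]
    constructor
    · rintro ⟨⟨-, hz⟩, hlt⟩
      exact (mem_take_iff_idxOf_lt hz).2 hlt
    · intro hz
      have hzM := mem_of_mem_take hz
      have hlt := (mem_take_iff_idxOf_lt hzM).1 hz
      exact ⟨⟨by rintro rfl; omega, hzM⟩, hlt⟩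
  rw [Finset.sum_boole, hset, toFinset_card_of_nodup ((take_sublist _ _).nodup hM), length_take,
    min_eq_left (idxOf_lt_length_of_mem hr).le]

def mtf2Move (bits : α → Bool) (A : List α) (r : α) : List α :=
  if !bits r then A else r :: A.erase r

theorem mtf2Move_perm (bits : α → Bool) {A : List α} {r : α} (hr : r ∈ A) :
    mtf2Move bits A r ~ A := by
  unfold mtf2Move
  split_ifs
  · rfl
  · exact (perm_cons_erase hr).symm

theorem before_mtf2Move_of_ne (bits : α → Bool) {A : List α} {r x y : α} (hr : r ∈ A)
    (hx : x ≠ r) (hy : y ≠ r) : before (mtf2Move bits A r) x y = before A x y := by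
  unfold mtf2Move
  split_ifs
  · rfl
  · rw [before_cons_of_ne hx hy, before_erase hr hx hy]

theorem before_mtf2Move_self (bits : α → Bool) (A : List α) {r y : α} (hy : y ≠ r) :
    before (mtf2Move bits A r) r y = (bits r || before A r y) := by
  unfold mtf2Move
  cases bits r <;> simp [before_cons_self hy]

/-- The potential of an ordered pair `(x, y)` of distinct items, given whether `x` precedes `y`
in MTF2's list, the bits of `x` and of `y`, and whether `x` precedes `y` in the offline list. -/
def pairPotential : Bool → Bool → Bool → Bool → ℤ
  | false, false, false, false => 0
  | false, false, false, true  => 4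
  | false, false, true,  false => 0
  | false, false, true,  true  => 5
  | false, true,  false, false => 1
  | false, true,  false, true  => 2
  | false, true,  true,  false => 1
  | false, true,  true,  true  => 3
  | true,  false, false, false => 4
  | true,  false, false, true  => 0
  | true,  false, true,  false => 2
  | true,  false, true,  true  => 1
  | true,  true,  false, false => 5
  | true,  true,  false, true  => 0
  | true,  true,  true,  false => 3
  | true,  true,  true,  true  => 1

theorem pairPotential_nonneg : ∀ p bx by' q, 0 ≤ pairPotential p bx by' q := by decide

theorem pairPotential_le_five : ∀ p bx by' q, pairPotential p bx by' q ≤ 5 := by decide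

theorem pairPotential_swap :
    ∀ p bx by' q, pairPotential (!p) by' bx (!q) = pairPotential p bx by' q := by
  decide

/-- An access to `x`, seen from the pair `(x, y)`: `p` and `q` say whether `x` precedes `y` in
MTF2's and the offline list before the access, `q'` in the offline list after it. MTF2 pays
for `y` exactly when `p` is false, the offline algorithm when `q` is false; the pair `(y, x)`
contributes the same amount, which turns the ratio `5 / 2` into `10 / 4`. -/
theorem pairPotential_access : ∀ p bx by' q q', (q = true → q' = true) →
    2 * (if p then 0 else 1) + pairPotential (bx || p) (!bx) by' q'
      ≤ 5 * (if q then 0 else 1) + pairPotential p bx by' q := by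
  decide

def pairTerm (A : List α) (bits : α → Bool) (O : List α) (x y : α) : ℤ :=
  pairPotential (before A x y) (bits x) (bits y) (before O x y)

theorem pairTerm_nonneg (A : List α) (bits : α → Bool) (O : List α) (x y : α) :
    0 ≤ pairTerm A bits O x y :=
  pairPotential_nonneg _ _ _ _

theorem pairTerm_le_five (A : List α) (bits : α → Bool) (O : List α) (x y : α) :
    pairTerm A bits O x y ≤ 5 :=
  pairPotential_le_five _ _ _ _

def potential (S : Finset α) (A : List α) (bits : α → Bool) (O : List α) : ℤ :=
  ∑ x ∈ S, ∑ y ∈ S.erase x, pairTerm A bits O x y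

theorem potential_nonneg (S : Finset α) (A : List α) (bits : α → Bool) (O : List α) :
    0 ≤ potential S A bits O :=
  Finset.sum_nonneg fun _ _ => Finset.sum_nonneg fun _ _ => pairTerm_nonneg _ _ _ _ _

theorem potential_le (S : Finset α) (A : List α) (bits : α → Bool) (O : List α) :
    potential S A bits O ≤ 5 * S.card ^ 2 := by
  have hrow : ∀ x ∈ S, ∑ y ∈ S.erase x, pairTerm A bits O x y ≤ S.card • 5 := fun x _ =>
    (Finset.sum_le_card_nsmul _ _ _ fun _ _ => pairTerm_le_five _ _ _ _ _).trans
      (nsmul_le_nsmul_left (by norm_num) (Finset.card_erase_le))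
  calc potential S A bits O ≤ S.card • (S.card • 5) := Finset.sum_le_card_nsmul _ _ _ hrow
    _ = 5 * S.card ^ 2 := by simp only [nsmul_eq_mul]; ring

theorem pairTerm_swap {A O : List α} (bits : α → Bool) {x y : α} (hxA : x ∈ A) (hxO : x ∈ O)
    (hxy : x ≠ y) : pairTerm A bits O y x = pairTerm A bits O x y := by
  rw [pairTerm, pairTerm, before_swap hxA hxy, before_swap hxO hxy, pairPotential_swap]

theorem sum_sum_erase_eq {M : Type*} [AddCommMonoid M] {S : Finset α} {r : α} (hr : r ∈ S)
    (T : α → α → M) :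
    ∑ x ∈ S, ∑ y ∈ S.erase x, T x y
      = ∑ y ∈ S.erase r, (T r y + T y r)
        + ∑ x ∈ S.erase r, ∑ y ∈ (S.erase x).erase r, T x y := by
  have hsplit : ∀ x ∈ S.erase r,
      ∑ y ∈ S.erase x, T x y = T x r + ∑ y ∈ (S.erase x).erase r, T x y := fun x hx =>
    (Finset.add_sum_erase _ _ (Finset.mem_erase.2 ⟨(Finset.ne_of_mem_erase hx).symm, hr⟩)).symm
  rw [← Finset.add_sum_erase S _ hr, Finset.sum_congr rfl hsplit, Finset.sum_add_distrib,
    Finset.sum_add_distrib, add_assoc]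

theorem sum_sum_erase_sub_eq {G : Type*} [AddCommGroup G] {S : Finset α} {r : α} (hr : r ∈ S)
    {T T' : α → α → G} (h : ∀ x y, x ≠ r → y ≠ r → T' x y = T x y) :
    ∑ x ∈ S, ∑ y ∈ S.erase x, T' x y - ∑ x ∈ S, ∑ y ∈ S.erase x, T x y
      = ∑ y ∈ S.erase r, (T' r y + T' y r - (T r y + T y r)) := by
  have hrest : ∑ x ∈ S.erase r, ∑ y ∈ (S.erase x).erase r, T' x y
      = ∑ x ∈ S.erase r, ∑ y ∈ (S.erase x).erase r, T x y :=
    Finset.sum_congr rfl fun x hx => Finset.sum_congr rfl fun y hy =>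
      h x y (Finset.ne_of_mem_erase hx) (Finset.ne_of_mem_erase hy)
  rw [sum_sum_erase_eq hr, sum_sum_erase_eq hr, hrest, Finset.sum_sub_distrib]
  abel

theorem potential_adjSwap_le {S : Finset α} (A : List α) (bits : α → Bool) {O : List α}
    (hO : ∀ x ∈ O, x ∈ S) (i : ℕ) :
    potential S A bits (adjSwap O i) ≤ potential S A bits O + 10 := by
  rcases adjSwap_eq_self_or O i with h | ⟨u, a, b, t, rfl, h⟩
  · rw [h]; omega
  rw [h]
  have hpair : ∀ x y, ¬(x = a ∧ y = b) → ¬(x = b ∧ y = a) →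
      pairTerm A bits (u ++ b :: a :: t) x y = pairTerm A bits (u ++ a :: b :: t) x y :=
    fun x y hab hba => by rw [pairTerm, pairTerm, before_append_swap u t hab hba]
  have hdiff := sum_sum_erase_sub_eq (S := S) (hO a (by simp))
    fun x y hx _ => hpair x y (by tauto) (by tauto)
  have hchange : ∀ y ∈ S.erase a,
      pairTerm A bits (u ++ b :: a :: t) a y + pairTerm A bits (u ++ b :: a :: t) y a
        - (pairTerm A bits (u ++ a :: b :: t) a y + pairTerm A bits (u ++ a :: b :: t) y a)
      ≤ if y = b then 10 else 0 := by
    intro y hy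
    split_ifs with hyb
    · linarith [pairTerm_le_five A bits (u ++ b :: a :: t) a y,
        pairTerm_le_five A bits (u ++ b :: a :: t) y a,
        pairTerm_nonneg A bits (u ++ a :: b :: t) a y,
        pairTerm_nonneg A bits (u ++ a :: b :: t) y a]
    · have hya := Finset.ne_of_mem_erase hy
      rw [hpair a y (by tauto) (by tauto), hpair y a (by tauto) (by tauto), sub_self]
  have hsum := (Finset.sum_le_sum hchange).trans_eq (Finset.sum_ite_eq' _ _ _)
  unfold potential
  split_ifs at hsum <;> linarith

theorem potential_doPaid_le {S : Finset α} (A : List α) (bits : α → Bool) (ps : List ℕ)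
    {O : List α} (hO : ∀ x ∈ O, x ∈ S) :
    potential S A bits (doPaid O ps) ≤ potential S A bits O + 10 * ps.length := by
  induction ps generalizing O with
  | nil => simp [doPaid]
  | cons p ps ih =>
    have hswap := potential_adjSwap_le A bits hO p
    have hrest := ih fun x hx => hO x ((adjSwap_perm O p).mem_iff.1 hx)
    change potential S A bits (doPaid (adjSwap O p) ps) ≤ _
    push_cast [length_cons]
    linarith

theorem pairTerm_access_le (bits : α → Bool) {A O : List α} {r y : α} (hrA : r ∈ A)
    (hO : O.Nodup) (hrO : r ∈ O) (hyr : y ≠ r) (t : ℕ) :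
    4 * (if before A y r then 1 else 0)
        + (pairTerm (mtf2Move bits A r) (Function.update bits r (!bits r)) (freeMove O r t) r y
          + pairTerm (mtf2Move bits A r) (Function.update bits r (!bits r)) (freeMove O r t) y r)
      ≤ 10 * (if before O y r then 1 else 0)
        + (pairTerm A bits O r y + pairTerm A bits O y r) := by
  rw [pairTerm_swap _ ((mtf2Move_perm bits hrA).mem_iff.2 hrA)
      ((freeMove_perm hrO t).mem_iff.2 hrO) hyr.symm,
    pairTerm_swap _ hrA hrO hyr.symm, before_swap hrA hyr.symm, before_swap hrO hyr.symm]
  have hkey := pairPotential_access (before A r y) (bits r) (bits y) (before O r y)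
    (before (freeMove O r t) r y) (before_freeMove_self hO t)
  simp only [pairTerm, before_mtf2Move_self bits A hyr, Function.update_self,
    Function.update_of_ne hyr]
  generalize before A r y = p, before O r y = q at hkey ⊢
  cases p <;> cases q <;> simp only [Bool.not_false, Bool.not_true, Bool.or_false, Bool.or_true,
    Bool.false_eq_true, if_true, if_false] at hkey ⊢ <;> linarith

theorem stepList_perm {O : List α} {r : α} (hr : r ∈ O) (a : Action α) : stepList O r a ~ O :=
  (freeMove_perm ((doPaid_perm O a.paid).mem_iff.2 hr) a.target).trans (doPaid_perm O a.paid)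

theorem mtf2Cost_cons (c : ℕ) (bits : α → Bool) (A : List α) (r : α) (σ : List α) :
    mtf2Cost c bits A (r :: σ)
      = A.idxOf r + c + mtf2Cost c (Function.update bits r (!bits r)) (mtf2Move bits A r) σ :=
  rfl

theorem exists_serveCost_eq_optCost (c : ℕ) (L σ : List α) :
    ∃ as : List (Action α), as.length = σ.length ∧ serveCost c L σ as = optCost c L σ :=
  Nat.sInf_mem (s := {n | ∃ as : List (Action α), as.length = σ.length ∧ serveCost c L σ as = n})
    ⟨_, σ.map fun _ => Action.mk [] 0, by simp, rfl⟩

section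

variable {L : List α} (hL : L.Nodup)
include hL

theorem potential_access_le {A O : List α} (hA : A ~ L) (hO : O ~ L) {r : α} (hr : r ∈ L)
    (bits : α → Bool) (t : ℕ) :
    4 * (A.idxOf r : ℤ)
        + potential L.toFinset (mtf2Move bits A r) (Function.update bits r (!bits r))
          (freeMove O r t)
      ≤ 10 * (O.idxOf r : ℤ) + potential L.toFinset A bits O := by
  have hrA : r ∈ A := hA.mem_iff.2 hr
  have hrO : r ∈ O := hO.mem_iff.2 hr
  have hAN : A.Nodup := hA.nodup_iff.2 hL
  have hON : O.Nodup := hO.nodup_iff.2 hL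
  have hdiff := sum_sum_erase_sub_eq (mem_toFinset.2 hr) (T := pairTerm A bits O)
    (T' := pairTerm (mtf2Move bits A r) (Function.update bits r (!bits r)) (freeMove O r t))
    fun x y hx hy => by
      rw [pairTerm, pairTerm, before_mtf2Move_of_ne bits hrA hx hy,
        before_freeMove_of_ne hrO t hx hy, Function.update_of_ne hx, Function.update_of_ne hy]
  have hsum := Finset.sum_le_sum (s := L.toFinset.erase r) fun y hy =>
    pairTerm_access_le bits hrA hON hrO (Finset.ne_of_mem_erase hy) t
  have hcountA :
      ∑ y ∈ L.toFinset.erase r, (if before A y r then (1 : ℤ) else 0) = A.idxOf r := by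
    rw [← toFinset_eq_of_perm _ _ hA, sum_ite_before_eq_idxOf hAN hrA]
  have hcountO :
      ∑ y ∈ L.toFinset.erase r, (if before O y r then (1 : ℤ) else 0) = O.idxOf r := by
    rw [← toFinset_eq_of_perm _ _ hO, sum_ite_before_eq_idxOf hON hrO]
  simp only [Finset.sum_add_distrib, ← Finset.mul_sum, hcountA, hcountO] at hsum
  unfold potential
  simp only [Finset.sum_sub_distrib, Finset.sum_add_distrib] at hdiff
  linarith

theorem potential_step_le {A O : List α} (hA : A ~ L) (hO : O ~ L) {r : α} (hr : r ∈ L)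
    (bits : α → Bool) (a : Action α) :
    4 * (A.idxOf r + 1 : ℤ)
        + potential L.toFinset (mtf2Move bits A r) (Function.update bits r (!bits r))
          (stepList O r a)
      ≤ 10 * (stepCost 1 O r a : ℤ) + potential L.toFinset A bits O := by
  have hpaid := potential_doPaid_le A bits a.paid fun x hx => mem_toFinset.2 (hO.mem_iff.1 hx)
  have hacc := potential_access_le hL hA ((doPaid_perm O a.paid).trans hO) hr bits a.target
  rw [stepList, stepCost]
  push_cast
  linarith

theorem four_mul_mtf2Cost_le (σ : List α) (hσ : ∀ r ∈ σ, r ∈ L) (as : List (Action α))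
    (has : as.length = σ.length) {A O : List α} (hA : A ~ L) (hO : O ~ L) (bits : α → Bool) :
    4 * (mtf2Cost 1 bits A σ : ℤ)
      ≤ 10 * (serveCost 1 O σ as : ℤ) + potential L.toFinset A bits O := by
  induction σ generalizing as A O bits with
  | nil => simpa [mtf2Cost, serveCost] using potential_nonneg L.toFinset A bits O
  | cons r σ ih =>
    obtain _ | ⟨a, as⟩ := as
    · simp at has
    have hr := hσ r mem_cons_self
    have hstep := potential_step_le hL hA hO hr bits a
    have hrest := ih (fun x hx => hσ x (mem_cons_of_mem r hx)) as (by simpa using has)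
      ((mtf2Move_perm bits (hA.mem_iff.2 hr)).trans hA)
      ((stepList_perm (hO.mem_iff.2 hr) a).trans hO) (Function.update bits r (!bits r))
    rw [mtf2Cost_cons, serveCost]
    push_cast
    linarith

end

end ListUpdate

open ListUpdate

/-- For every list of `l` items with any initial order and any initial bit assignment,
the MTF2 algorithm is `2.5`-competitive under the full cost model: there is a constant
`b` depending only on `l` such that `MTF2(σ) ≤ 2.5·OPT(σ) + b` for every request
sequence `σ`. -/
theorem mtf2_upper_bound (l : ℕ) :
    ∃ b : ℝ, ∀ (α : Type) (_ : DecidableEq α) (L : List α), L.Nodup → L.length = l →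
      ∀ (bits : α → Bool) (σ : List α), (∀ r ∈ σ, r ∈ L) →
        (mtf2Cost 1 bits L σ : ℝ) ≤ 2.5 * (optCost 1 L σ : ℝ) + b := by
  refine ⟨5 * l ^ 2 / 4, fun α _ L hL hlen bits σ hσ => ?_⟩
  obtain ⟨as, has, hopt⟩ := exists_serveCost_eq_optCost 1 L σ
  have hmain := four_mul_mtf2Cost_le hL σ hσ as has (.refl L) (.refl L) bits
  have hpot := potential_le L.toFinset L bits L
  rw [List.toFinset_card_of_nodup hL, hlen] at hpot
  rw [hopt] at hmain
  have hint : 4 * (mtf2Cost 1 bits L σ : ℤ) ≤ 10 * optCost 1 L σ + 5 * l ^ 2 := by linarith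
  have hreal : 4 * (mtf2Cost 1 bits L σ : ℝ) ≤ 10 * optCost 1 L σ + 5 * l ^ 2 := by
    exact_mod_cast hint
  linarith
end
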